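/- arXiv:1204.5007 — 6 statements merged into one kernel-verified Lean document; each statement's English description precedes it below -/
import Mathlib

section
/- Let p, q ∈ ℝ⁴ with |p| = |q| = 1, let ν be a unit vector orthogonal to p, Φ > 0, and suppose Φ(1 - ⟨p,q⟩) + ⟨q,ν⟩ = 0 with q ≠ p. Setting d = |q - p| and ℓ = (q - p)/d, the reflection R(z) = z - 2⟨ℓ,z⟩ℓ satisfies R(ν) = ν + Φ d ℓ. -/
open scoped RealInnerProductSpace

/-! For unit vectors `‖q - p‖² = 2(1 - ⟪p, q⟫)`, so together with `⟪p, ν⟫ = 0` the touching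
condition reads `⟪q - p, ν⟫ = -(Φ/2) d²`. Hence `⟪ℓ, ν⟫ = -Φ d / 2`, which is exactly the
coefficient the reflection needs. -/

section

variable {E : Type*} [NormedAddCommGroup E] [InnerProductSpace ℝ E]

theorem norm_sub_sq_eq_two_mul_one_sub_inner {p q : E} (hp : ‖p‖ = 1) (hq : ‖q‖ = 1) :
    ‖q - p‖ ^ 2 = 2 * (1 - ⟪p, q⟫) := by
  rw [norm_sub_sq_real, hp, hq, real_inner_comm]
  ring

theorem inner_sub_eq_of_touching {p q ν : E} {Φ : ℝ} (hp : ‖p‖ = 1) (hq : ‖q‖ = 1)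
    (horth : ⟪p, ν⟫ = 0) (hZ : Φ * (1 - ⟪p, q⟫) + ⟪q, ν⟫ = 0) :
    ⟪q - p, ν⟫ = -(Φ / 2) * ‖q - p‖ ^ 2 := by
  rw [inner_sub_left, horth, norm_sub_sq_eq_two_mul_one_sub_inner hp hq]
  linarith

theorem inner_inv_norm_smul_of_inner_eq_mul_norm_sq {u ν : E} {c : ℝ}
    (h : ⟪u, ν⟫ = c * ‖u‖ ^ 2) : ⟪‖u‖⁻¹ • u, ν⟫ = c * ‖u‖ := by
  rw [real_inner_smul_left, h, sq, mul_left_comm, ← mul_assoc ‖u‖⁻¹, inv_mul_mul_self]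

end

theorem stmt1_general (p q ν : EuclideanSpace ℝ (Fin 4)) (Φ : ℝ)
    (hp : ‖p‖ = 1) (hq : ‖q‖ = 1) (horth : ⟪p, ν⟫ = 0)
    (hZ : Φ * (1 - ⟪p, q⟫) + ⟪q, ν⟫ = 0) :
    let d : ℝ := ‖q - p‖
    let ℓ : EuclideanSpace ℝ (Fin 4) := d⁻¹ • (q - p)
    ν - (2 * ⟪ℓ, ν⟫) • ℓ = ν + (Φ * d) • ℓ := by
  intro d ℓ
  have hℓν : ⟪ℓ, ν⟫ = -(Φ / 2) * d :=
    inner_inv_norm_smul_of_inner_eq_mul_norm_sq (inner_sub_eq_of_touching hp hq horth hZ)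
  rw [hℓν, sub_eq_add_neg, ← neg_smul]
  congr 2
  ring

/-- If `p, q` are unit vectors in ℝ⁴ with `q ≠ p`, `ν` a unit vector with
`⟪p, ν⟫ = 0`, `Φ > 0`, and `Φ(1 - ⟪p,q⟫) + ⟪q,ν⟫ = 0`, then with `d = ‖q - p‖` and
`ℓ = d⁻¹ • (q - p)`, the reflection `R z = z - 2⟪ℓ,z⟫ • ℓ` satisfies `R ν = ν + (Φ d) • ℓ`. -/
theorem stmt1 (p q ν : EuclideanSpace ℝ (Fin 4)) (Φ : ℝ) (hΦ : 0 < Φ)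
    (hp : ‖p‖ = 1) (hq : ‖q‖ = 1) (hν : ‖ν‖ = 1) (horth : ⟪p, ν⟫ = 0)
    (hne : q ≠ p) (hZ : Φ * (1 - ⟪p, q⟫) + ⟪q, ν⟫ = 0) :
    let d : ℝ := ‖q - p‖
    let ℓ : EuclideanSpace ℝ (Fin 4) := d⁻¹ • (q - p)
    ν - (2 * ⟪ℓ, ν⟫) • ℓ = ν + (Φ * d) • ℓ :=
  stmt1_general p q ν Φ hp hq horth hZ
end

section
/- Fix H ≥ 0 and C > 2(H + √(1+H²)). Every solution of g'(u)² + g⁻² + (1+H²)g² + 2H = C with g > 0 is given by g(u)² = (C - 2H + √(C² - 4 - 4HC)·sin(2√(1+H²)(u - u₀)))/(2(1+H²)) for some constant u₀; in particular g is periodic with period π/√(1+H²). -/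
private lemma exists_theta (x y D : ℝ) (hD : 0 < D) (h : x ^ 2 + y ^ 2 = D ^ 2) :
    ∃ θ : ℝ, Real.cos θ = x / D ∧ Real.sin θ = y / D := by
  have habs : ‖(⟨x, y⟩ : ℂ)‖ = D := by
    rw [Complex.norm_def, Complex.normSq_mk,
      show x * x + y * y = D ^ 2 by nlinarith]
    exact Real.sqrt_sq hD.le
  have hzne : (⟨x, y⟩ : ℂ) ≠ 0 := by
    intro h0
    rw [h0] at habs
    simp at habs
    exact hD.ne' habs.symm
  exact ⟨Complex.arg ⟨x, y⟩, by rw [Complex.cos_arg hzne, habs],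
    by rw [Complex.sin_arg, habs]⟩

/-- Every positive smooth non-constant solution of
`(g')² + g⁻² + (1+H²)g² + 2H = C` (with `H ≥ 0`, `C > 2(H+√(1+H²))`) satisfies
`g(u)² = (C - 2H + √(C²-4-4HC)·sin(2√(1+H²)(u-u₀)))/(2(1+H²))` for some `u₀`;
in particular `g` has period `π/√(1+H²)`. -/
theorem stmt7 (H C : ℝ) (hH : 0 ≤ H) (hC : C > 2 * (H + Real.sqrt (1 + H ^ 2)))
    (g : ℝ → ℝ) (hg : ContDiff ℝ (⊤ : ℕ∞) g) (hgpos : ∀ u, 0 < g u)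
    (hnc : ∃ u v : ℝ, g u ≠ g v)
    (hODE : ∀ u, (deriv g u) ^ 2 + ((g u) ^ 2)⁻¹ + (1 + H ^ 2) * (g u) ^ 2 + 2 * H = C) :
    (∃ u₀ : ℝ, ∀ u, (g u) ^ 2 =
        (C - 2 * H + Real.sqrt (C ^ 2 - 4 - 4 * H * C) *
          Real.sin (2 * Real.sqrt (1 + H ^ 2) * (u - u₀))) / (2 * (1 + H ^ 2))) ∧
      (∀ u, g (u + Real.pi / Real.sqrt (1 + H ^ 2)) = g u) := by
  have ha : (0:ℝ) < 1 + H ^ 2 := by positivity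
  have hsa : 0 < Real.sqrt (1 + H ^ 2) := Real.sqrt_pos.mpr ha
  have hsa2 : Real.sqrt (1 + H ^ 2) ^ 2 = 1 + H ^ 2 := Real.sq_sqrt ha.le
  set k : ℝ := 2 * Real.sqrt (1 + H ^ 2) with hk_def
  have hk : 0 < k := by positivity
  have hk2 : k ^ 2 = 4 * (1 + H ^ 2) := by rw [hk_def]; nlinarith [hsa2]
  have hb : 2 * Real.sqrt (1 + H ^ 2) < C - 2 * H := by linarith
  have hDpos2 : 0 < C ^ 2 - 4 - 4 * H * C := by
    have h1 : (0:ℝ) < (C - 2*H) - 2 * Real.sqrt (1 + H ^ 2) := by linarith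
    have h2 : (0:ℝ) < (C - 2*H) + 2 * Real.sqrt (1 + H ^ 2) := by linarith
    nlinarith [mul_pos h1 h2, hsa2]
  set D : ℝ := Real.sqrt (C ^ 2 - 4 - 4 * H * C) with hD_def
  have hD2 : D ^ 2 = C ^ 2 - 4 - 4 * H * C := Real.sq_sqrt hDpos2.le
  have hDpos : 0 < D := Real.sqrt_pos.mpr hDpos2
  set h : ℝ → ℝ := fun u => 2 * (1 + H ^ 2) * (g u) ^ 2 - (C - 2 * H) with hh_def
  have hgi : ContDiff ℝ (⊤:ℕ∞) g := hg.of_le (by simp)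
  have hsm : ContDiff ℝ (⊤:ℕ∞) h := (contDiff_const.mul (hgi.pow 2)).sub contDiff_const
  have hgd : ∀ u, HasDerivAt g (deriv g u) u := fun u =>
    (hgi.differentiable (by simp) u).hasDerivAt
  have hder : ∀ u, HasDerivAt h (4 * (1 + H ^ 2) * g u * deriv g u) u := by
    intro u
    have := (((hgd u).pow 2).const_mul (2 * (1 + H ^ 2))).sub_const (C - 2 * H)
    refine this.congr_deriv ?_
    push_cast; ring
  have hder_fun : ∀ u, deriv h u = 4 * (1 + H ^ 2) * g u * deriv g u := fun u =>
    (hder u).deriv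
  have hsm' : ContDiff ℝ (⊤:ℕ∞) (deriv h) := (contDiff_infty_iff_deriv.mp hsm).2
  have hsm'' : ContDiff ℝ (⊤:ℕ∞) (deriv (deriv h)) := (contDiff_infty_iff_deriv.mp hsm').2
  -- the first integral
  have I1 : ∀ u, (deriv h u) ^ 2 + k ^ 2 * (h u) ^ 2 = k ^ 2 * D ^ 2 := by
    intro u
    have hgu : g u ≠ 0 := (hgpos u).ne'
    have hinv : (g u) ^ 2 * ((g u) ^ 2)⁻¹ = 1 := by field_simp
    rw [hder_fun u, hh_def, hk2, hD2]
    simp only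
    linear_combination (16 * (1 + H ^ 2) ^ 2 * (g u) ^ 2) * hODE u -
      16 * (1 + H ^ 2) ^ 2 * hinv
  -- differentiate the first integral
  have star : ∀ u, deriv h u * (deriv (deriv h) u + k ^ 2 * h u) = 0 := by
    intro u
    have hE1 : HasDerivAt (fun u => (deriv h u) ^ 2 + k ^ 2 * (h u) ^ 2)
        (2 * deriv h u * deriv (deriv h) u + k ^ 2 * (2 * h u * deriv h u)) u := by
      have := ((hsm'.differentiable (by simp) u).hasDerivAt.pow 2).add
        (((hsm.differentiable (by simp) u).hasDerivAt.pow 2).const_mul (k ^ 2))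
      refine this.congr_deriv ?_
      push_cast; ring
    have hEeq : (fun u => (deriv h u) ^ 2 + k ^ 2 * (h u) ^ 2) =
        fun _ => k ^ 2 * D ^ 2 := funext I1
    rw [hEeq] at hE1
    have h0 := hE1.unique (hasDerivAt_const u _)
    linear_combination h0 / 2
  -- the exceptional set is clopen
  set F : Set ℝ := {u | deriv (deriv h) u + k ^ 2 * h u ≠ 0} with hF_def
  have hFopen : IsOpen F := by
    have : Continuous (fun u => deriv (deriv h) u + k ^ 2 * h u) :=
      hsm''.continuous.add (continuous_const.mul hsm.continuous)
    exact isOpen_ne_fun this continuous_const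
  have hF0 : ∀ u ∈ F, deriv h u = 0 := by
    intro u hu
    by_contra hne
    exact hu (by
      have := star u
      rcases mul_eq_zero.mp this with h1 | h1
      · exact absurd h1 hne
      · exact h1)
  have hFG : ∀ u ∈ F, deriv (deriv h) u = 0 ∧ (h u) ^ 2 = D ^ 2 := by
    intro u hu
    constructor
    · have hev : deriv h =ᶠ[nhds u] (fun _ => (0:ℝ)) :=
        Filter.eventuallyEq_of_mem (hFopen.mem_nhds hu) (fun x hx => hF0 x hx)
      calc deriv (deriv h) u = deriv (fun _ => (0:ℝ)) u := hev.deriv_eq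
        _ = 0 := deriv_const u 0
    · have := I1 u
      rw [hF0 u hu] at this
      have hk2ne : k ^ 2 ≠ 0 := by positivity
      exact mul_left_cancel₀ hk2ne (by linarith)
  have hFclosed : IsClosed F := by
    have hGclosed : IsClosed {u : ℝ | deriv h u = 0 ∧ deriv (deriv h) u = 0 ∧
        (h u) ^ 2 = D ^ 2} := by
      refine ((isClosed_eq hsm'.continuous continuous_const).inter
        ((isClosed_eq hsm''.continuous continuous_const).inter
          (isClosed_eq (hsm.continuous.pow 2) continuous_const)))
    have hFeq : F = {u : ℝ | deriv h u = 0 ∧ deriv (deriv h) u = 0 ∧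
        (h u) ^ 2 = D ^ 2} := by
      apply Set.Subset.antisymm
      · intro u hu
        exact ⟨hF0 u hu, (hFG u hu).1, (hFG u hu).2⟩
      · intro u hu
        have hne : h u ≠ 0 := by
          intro h0
          have h22 := hu.2.2
          rw [h0] at h22
          simp at h22
          nlinarith [hDpos]
        show deriv (deriv h) u + k ^ 2 * h u ≠ 0
        rw [hu.2.1, zero_add]
        exact mul_ne_zero (by positivity) hne
    rw [hFeq]; exact hGclosed
  have hclopen : IsClopen F := ⟨hFclosed, hFopen⟩
  rcases isClopen_iff.mp hclopen with hFe | hFu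
  swap
  · -- F = univ: g constant, contradiction
    exfalso
    obtain ⟨u, v, huv⟩ := hnc
    apply huv
    apply is_const_of_deriv_eq_zero (hgi.differentiable (by simp)) _ u v
    intro x
    have hx : x ∈ F := hFu ▸ Set.mem_univ x
    have := hF0 x hx
    rw [hder_fun x] at this
    have h4 : 4 * (1 + H ^ 2) * g x ≠ 0 := mul_ne_zero (by positivity) (hgpos x).ne'
    rcases mul_eq_zero.mp this with h1 | h1
    · exact absurd h1 h4
    · exact h1
  -- F = ∅: h'' = -k² h everywhere
  have hODE2 : ∀ u, deriv (deriv h) u = -(k ^ 2) * h u := by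
    intro u
    have : u ∉ F := hFe ▸ Set.notMem_empty u
    have h0 : deriv (deriv h) u + k ^ 2 * h u = 0 := by
      by_contra hne; exact this hne
    linarith
  -- solve the oscillator
  obtain ⟨c, s, hc_def, hs_def⟩ : ∃ c s : ℝ, h 0 = c ∧ deriv h 0 = s := ⟨_, _, rfl, rfl⟩
  set φ : ℝ → ℝ := fun u => c * Real.cos (k * u) + (s / k) * Real.sin (k * u) with hφ_def
  set ψ : ℝ → ℝ := fun u => (-(c * k)) * Real.sin (k * u) + s * Real.cos (k * u) with hψ_def
  have hku : ∀ u : ℝ, HasDerivAt (fun u : ℝ => k * u) k u := by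
    intro u
    simpa using (hasDerivAt_id u).const_mul k
  have hφ' : ∀ u, HasDerivAt φ (ψ u) u := by
    intro u
    have h1 := ((hku u).cos).const_mul c
    have h2 := ((hku u).sin).const_mul (s / k)
    have := h1.add h2
    refine this.congr_deriv ?_
    rw [hψ_def]
    field_simp
  have hψ' : ∀ u, HasDerivAt ψ (-(k ^ 2) * φ u) u := by
    intro u
    have h1 := ((hku u).sin).const_mul (-(c * k))
    have h2 := ((hku u).cos).const_mul s
    have := h1.add h2
    refine this.congr_deriv ?_
    rw [hφ_def]
    field_simp
    ring
  set r : ℝ → ℝ := fun u => k ^ 2 * (h u - φ u) ^ 2 + (deriv h u - ψ u) ^ 2 with hr_def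
  have hr' : ∀ u, HasDerivAt r 0 u := by
    intro u
    have A : HasDerivAt (fun u => h u - φ u) (deriv h u - ψ u) u :=
      (hsm.differentiable (by simp) u).hasDerivAt.sub (hφ' u)
    have B : HasDerivAt (fun u => deriv h u - ψ u)
        (deriv (deriv h) u - (-(k ^ 2) * φ u)) u :=
      (hsm'.differentiable (by simp) u).hasDerivAt.sub (hψ' u)
    have := ((A.pow 2).const_mul (k ^ 2)).add (B.pow 2)
    refine this.congr_deriv ?_
    rw [hODE2 u]
    push_cast; ring
  have hr_const : ∀ u, r u = r 0 := by
    intro u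
    exact is_const_of_deriv_eq_zero (fun x => (hr' x).differentiableAt)
      (fun x => (hr' x).deriv) u 0
  have hr0 : r 0 = 0 := by
    rw [hr_def]
    simp only [hφ_def, hψ_def]
    rw [hc_def, hs_def]
    simp
  have heqφ : ∀ u, h u = φ u := by
    intro u
    have h1 : r u = 0 := (hr_const u).trans hr0
    rw [hr_def] at h1
    simp only at h1
    have h2 : (h u - φ u) ^ 2 = 0 := by
      nlinarith [sq_nonneg (h u - φ u), sq_nonneg (deriv h u - ψ u), hk]
    have h3 : h u - φ u = 0 := by
      exact sq_eq_zero_iff.mp h2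
    linarith
  -- rewrite φ as D sin(k(u - u₀))
  have hcs : (s / k) ^ 2 + c ^ 2 = D ^ 2 := by
    have hI0 := I1 0
    rw [hc_def, hs_def] at hI0
    have hkne : k ≠ 0 := hk.ne'
    field_simp
    linear_combination hI0
  obtain ⟨θ, hcos, hsin⟩ := exists_theta (s / k) c D hDpos hcs
  set u₀ : ℝ := -(θ / k) with hu₀_def
  have hmain : ∀ u, h u = D * Real.sin (k * (u - u₀)) := by
    intro u
    rw [heqφ u]
    have harg : k * (u - u₀) = k * u + θ := by
      rw [hu₀_def]; field_simp; ring
    rw [harg, Real.sin_add, hφ_def]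
    simp only
    rw [hcos, hsin]
    field_simp
    ring
  have hform : ∀ u, (g u) ^ 2 =
      (C - 2 * H + D * Real.sin (k * (u - u₀))) / (2 * (1 + H ^ 2)) := by
    intro u
    rw [eq_div_iff (by positivity : (2 * (1 + H ^ 2) : ℝ) ≠ 0)]
    have := hmain u
    rw [hh_def] at this
    simp only at this
    linarith
  constructor
  · exact ⟨u₀, hform⟩
  · intro u
    have harg : k * ((u + Real.pi / Real.sqrt (1 + H ^ 2)) - u₀) =
        k * (u - u₀) + 2 * Real.pi := by
      rw [hk_def]
      field_simp
      ring
    have hsq : (g (u + Real.pi / Real.sqrt (1 + H ^ 2))) ^ 2 = (g u) ^ 2 := by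
      rw [hform, hform, harg, Real.sin_add_two_pi]
    have h3 : (g (u + Real.pi / Real.sqrt (1 + H ^ 2)) - g u) *
        (g (u + Real.pi / Real.sqrt (1 + H ^ 2)) + g u) = 0 := by
      linear_combination hsq
    rcases mul_eq_zero.mp h3 with h1 | h1
    · exact sub_eq_zero.mp h1
    · exact absurd h1
        (add_pos (hgpos (u + Real.pi / Real.sqrt (1 + H ^ 2))) (hgpos u)).ne'
end

section
/- The explicit function g(u) = √((C - 2H + √(C² - 4 - 4HC)·sin(2√(1+H²)u))/(2(1+H²))) satisfies the first-order ODE (g')² + g⁻² + (1+H²)g² + 2H = C, provided H ≥ 0 and C > 2(H + √(1+H²)). -/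
/-!
Put `A = C - 2H`, `m = 1 + H²` and `p = g²`. Since `(g')² = p'² / (4p)`, the equation says
`p'² = 4(A p - m p² - 1)`, and for `p = (A + D sin (2√m u)) / (2m)` this is `sin² + cos² = 1`
combined with `D² = A² - 4m`. The same relation gives `|D| < A`, so `p` stays positive.
-/

open Real

lemma sq_deriv_sqrt_of_hasDerivAt {f : ℝ → ℝ} {f' x : ℝ} (hf : HasDerivAt f f' x) (hx : 0 < f x) :
    deriv (fun y => √(f y)) x ^ 2 = f' ^ 2 / (4 * f x) := by
  rw [(hf.sqrt hx.ne').deriv, div_pow, mul_pow, sq_sqrt hx.le]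
  norm_num

lemma add_mul_sin_pos {A D : ℝ} (hD : |D| < A) (θ : ℝ) : 0 < A + D * sin θ := by
  have h : |D * sin θ| ≤ |D| := by
    rw [abs_mul]
    exact mul_le_of_le_one_right (abs_nonneg D) (abs_sin_le_one θ)
  linarith [neg_abs_le (D * sin θ)]

noncomputable def sqrtSinusoid (A D m u : ℝ) : ℝ :=
  √((A + D * sin (2 * √m * u)) / (2 * m))

theorem sqrtSinusoid_energy_eq {A D m : ℝ} (hm : 0 < m) (hA : 0 < A) (hD : D ^ 2 = A ^ 2 - 4 * m)
    (u : ℝ) :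
    deriv (sqrtSinusoid A D m) u ^ 2 + (sqrtSinusoid A D m u ^ 2)⁻¹
      + m * sqrtSinusoid A D m u ^ 2 = A := by
  have hp : HasDerivAt (fun u => (A + D * sin (2 * √m * u)) / (2 * m))
      (D * (cos (2 * √m * u) * (2 * √m)) / (2 * m)) u := by
    simpa using
      ((((hasDerivAt_id u).const_mul (2 * √m)).sin.const_mul D).const_add A).div_const (2 * m)
  have hP : 0 < A + D * sin (2 * √m * u) :=
    add_mul_sin_pos (abs_lt_of_sq_lt_sq (by linarith) hA.le) _
  unfold sqrtSinusoid
  rw [sq_deriv_sqrt_of_hasDerivAt hp (by positivity), sq_sqrt (by positivity)]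
  have hsc := sin_sq_add_cos_sq (2 * √m * u)
  generalize sin (2 * √m * u) = s at *
  generalize cos (2 * √m * u) = c at *
  have hm' : √m ^ 2 = m := sq_sqrt hm.le
  field_simp
  rw [hm']
  linear_combination 4 * m * hD + 4 * m * D ^ 2 * hsc

theorem stmt8_general (H C : ℝ) (hC : C > 2 * (H + Real.sqrt (1 + H ^ 2))) :
    let g : ℝ → ℝ := fun u => Real.sqrt
      ((C - 2 * H + Real.sqrt (C ^ 2 - 4 - 4 * H * C) *
        Real.sin (2 * Real.sqrt (1 + H ^ 2) * u)) / (2 * (1 + H ^ 2)))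
    ∀ u : ℝ, (deriv g u) ^ 2 + ((g u) ^ 2)⁻¹ + (1 + H ^ 2) * (g u) ^ 2 + 2 * H = C := by
  intro g u
  have hb : 0 ≤ √(1 + H ^ 2) := sqrt_nonneg _
  have hb2 : √(1 + H ^ 2) ^ 2 = 1 + H ^ 2 := sq_sqrt (by positivity)
  have hrad : 0 ≤ C ^ 2 - 4 - 4 * H * C := by nlinarith
  have key := sqrtSinusoid_energy_eq (A := C - 2 * H) (D := √(C ^ 2 - 4 - 4 * H * C))
    (m := 1 + H ^ 2) (by positivity) (by linarith) (by rw [sq_sqrt hrad]; ring) u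
  have hg : g = sqrtSinusoid (C - 2 * H) √(C ^ 2 - 4 - 4 * H * C) (1 + H ^ 2) := rfl
  rw [hg]
  linarith

/-- The explicit function
`g(u) = √((C - 2H + √(C²-4-4HC)·sin(2√(1+H²)u))/(2(1+H²)))` satisfies
`(g')² + g⁻² + (1+H²)g² + 2H = C`, provided `H ≥ 0` and `C > 2(H+√(1+H²))`. -/
theorem stmt8 (H C : ℝ) (hH : 0 ≤ H) (hC : C > 2 * (H + Real.sqrt (1 + H ^ 2))) :
    let g : ℝ → ℝ := fun u => Real.sqrt
      ((C - 2 * H + Real.sqrt (C ^ 2 - 4 - 4 * H * C) *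
        Real.sin (2 * Real.sqrt (1 + H ^ 2) * u)) / (2 * (1 + H ^ 2)))
    ∀ u : ℝ, (deriv g u) ^ 2 + ((g u) ^ 2)⁻¹ + (1 + H ^ 2) * (g u) ^ 2 + 2 * H = C :=
  stmt8_general H C hC
end

section
/- Suppose r, λ : ℝ → ℝ are smooth with 0 < r < 1, and satisfy r'' / r + 1 + λ₁λ₂ = 0 and (r')² + r²(1+λ₁²) = 1, where λ₁ = λ and λ₂ = 2H - λ for constant H. Define θ'(u) = 2μ/((1+λ²)r) - d/du[arctan(r'/λ)] where μ = λ - H > 0. Then θ'(u) = λ r/(1 - r²). -/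
/-- For smooth `r, λ` with `0 < r < 1`, `λ > H`, `λ ≠ 0`, satisfying
`r''/r + 1 + λ(2H-λ) = 0` and `(r')² + r²(1+λ²) = 1`, the angular speed
`θ' = 2(λ-H)/((1+λ²)r) - d/du[arctan(r'/λ)]` equals `λr/(1-r²)`. -/
theorem stmt9 (H : ℝ) (r l : ℝ → ℝ) (hr : ContDiff ℝ (⊤ : ℕ∞) r) (hl : ContDiff ℝ (⊤ : ℕ∞) l)
    (hr0 : ∀ u, 0 < r u) (hr1 : ∀ u, r u < 1)
    (hlH : ∀ u, H < l u) (hl0 : ∀ u, l u ≠ 0)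
    (hODE1 : ∀ u, deriv (deriv r) u / r u + 1 + l u * (2 * H - l u) = 0)
    (hODE2 : ∀ u, (deriv r u) ^ 2 + (r u) ^ 2 * (1 + (l u) ^ 2) = 1) :
    ∀ u : ℝ,
      2 * (l u - H) / ((1 + (l u) ^ 2) * r u) -
        deriv (fun t => Real.arctan (deriv r t / l t)) u =
      l u * r u / (1 - (r u) ^ 2) := by
  have hr' : ContDiff ℝ ((⊤ : ℕ∞) : WithTop ℕ∞) (deriv r) := (contDiff_infty_iff_deriv.mp (hr.of_le (by simp))).2
  intro u
  have hRne : r u ≠ 0 := (hr0 u).ne'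
  have hLne : l u ≠ 0 := hl0 u
  have h1 : HasDerivAt r (deriv r u) u := ((hr.differentiable (by norm_num)) u).hasDerivAt
  have h2 : HasDerivAt (deriv r) (deriv (deriv r) u) u :=
    ((hr'.differentiable (by norm_num)) u).hasDerivAt
  have hL : HasDerivAt l (deriv l u) u := ((hl.differentiable (by norm_num)) u).hasDerivAt
  have hq : HasDerivAt (fun t => deriv r t / l t)
      ((deriv (deriv r) u * l u - deriv r u * deriv l u) / l u ^ 2) u := h2.div hL hLne
  have ha : HasDerivAt (fun t => Real.arctan (deriv r t / l t))
      (1 / (1 + (deriv r u / l u) ^ 2) *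
        ((deriv (deriv r) u * l u - deriv r u * deriv l u) / l u ^ 2)) u :=
    (Real.hasDerivAt_arctan _).comp u hq
  rw [ha.deriv]
  have hg := (h2.pow 2).add ((h1.pow 2).mul ((hasDerivAt_const u (1:ℝ)).add (hL.pow 2)))
  rw [show (deriv r ^ 2 + r ^ 2 * ((fun _ => (1:ℝ)) + l ^ 2)) = fun _ => (1:ℝ) from
    funext fun t => hODE2 t] at hg
  have e3 := (hasDerivAt_const u (1:ℝ)).unique hg
  set R := r u
  set L := l u
  set r1 := deriv r u
  set r2 := deriv (deriv r) u
  set l1 := deriv l u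
  have e1 : r2 = -R * (1 + L * (2 * H - L)) := by
    have := hODE1 u
    change r2 / R + 1 + L * (2 * H - L) = 0 at this
    field_simp at this
    linarith
  have e2 : r1 ^ 2 + R ^ 2 * (1 + L ^ 2) = 1 := hODE2 u
  have h1R : (1 : ℝ) - R ^ 2 ≠ 0 := by nlinarith [hr0 u, hr1 u]
  have h1L : (1 : ℝ) + L ^ 2 ≠ 0 := by positivity
  have hden : 1 + (r1 / L) ^ 2 ≠ 0 := by positivity
  have e3' : 2 * r1 * r2 + 2 * R * r1 * (1 + L ^ 2) + R ^ 2 * (2 * L * l1) = 0 := by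
    simp at e3
    nlinarith [e3]
  have el1 : R * l1 = -2 * (L - H) * r1 := by
    have hmul : R * L * (R * l1 + 2 * (L - H) * r1) = 0 := by
      rw [e1] at e3'
      linear_combination e3' / 2
    rcases mul_eq_zero.mp hmul with h | h
    · rcases mul_eq_zero.mp h with h' | h'
      · exact absurd h' hRne
      · exact absurd h' hLne
    · linarith
  have el1' : l1 = -2 * (L - H) * r1 / R := by
    field_simp
    linarith [el1]
  have e2' : r1 ^ 2 = 1 - R ^ 2 * (1 + L ^ 2) := by linarith
  rw [e1, el1']
  field_simp
  ring_nf
  rw [e2']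
  ring
end

section
/- For all C in the interval (2, ∞), the value K(0,C) satisfies π < K(0,C) < √2·π, where K(0,C) = ∫_{x₁}^{x₂} C⁻¹/(√u(1-u)√(-u² + u - C⁻²)) du and x₁ < x₂ are the roots of u² - u + C⁻² = 0. Consequently there is no integer m ≥ 2 with K(0,C) = 2π/m. -/
/-!
Write `a < b` for the roots, so `a + b = 1` and `a b = C⁻²`. The substitution
`u = a cos²θ + b sin²θ` turns `K` into `∫₀^{π/2} 2C⁻¹ / (D √N) dθ` with `N = a cos²θ + b sin²θ`
and `D = 1 - N = b cos²θ + a sin²θ`. The reflection `θ ↦ π/2 - θ` swaps `D` and `N`, so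
`2K = ∫₀^{π/2} (√D + √N) · 2C⁻¹ (1/D + 1/N) dθ`. As `D + N = 1`, we have `1 < √D + √N ≤ √2`,
strictly below `√2` where `D ≠ N` (e.g. at `θ = 0`), while
`∫₀^{π/2} dθ / (p cos²θ + q sin²θ) = π / (2√(pq))` gives `∫₀^{π/2} 2C⁻¹ (1/D + 1/N) dθ = 2π`.
Hence `π < K < √2 π`, and `2π/m ≤ π` for `m ≥ 2`.
-/

open Real MeasureTheory Set Filter Topology

noncomputable def cosSinQuad (a b θ : ℝ) : ℝ := a * cos θ ^ 2 + b * sin θ ^ 2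

namespace cosSinQuad

variable {a b : ℝ}

@[fun_prop]
theorem continuous : Continuous (cosSinQuad a b) := by
  unfold cosSinQuad; fun_prop

@[simp]
theorem apply_zero : cosSinQuad a b 0 = a := by simp [cosSinQuad]

@[simp]
theorem apply_pi_div_two : cosSinQuad a b (π / 2) = b := by simp [cosSinQuad]

theorem pos (ha : 0 < a) (hb : 0 < b) (θ : ℝ) : 0 < cosSinQuad a b θ := by
  unfold cosSinQuad
  nlinarith [lt_min ha hb, sin_sq_add_cos_sq θ,
    mul_nonneg (sub_nonneg.2 (min_le_left a b)) (sq_nonneg (cos θ)),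
    mul_nonneg (sub_nonneg.2 (min_le_right a b)) (sq_nonneg (sin θ))]

theorem pi_div_two_sub (θ : ℝ) : cosSinQuad a b (π / 2 - θ) = cosSinQuad b a θ := by
  simp only [cosSinQuad, cos_pi_div_two_sub, sin_pi_div_two_sub]; ring

theorem add_swap (θ : ℝ) : cosSinQuad a b θ + cosSinQuad b a θ = a + b := by
  unfold cosSinQuad; linear_combination (a + b) * sin_sq_add_cos_sq θ

theorem one_sub (hsum : a + b = 1) (θ : ℝ) : 1 - cosSinQuad a b θ = cosSinQuad b a θ := by
  rw [← hsum, ← add_swap θ]; ring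

theorem neg_sq_add_sub_sq {ε : ℝ} (hsum : a + b = 1) (hprod : a * b = ε ^ 2) (θ : ℝ) :
    -cosSinQuad a b θ ^ 2 + cosSinQuad a b θ - ε ^ 2 = ((b - a) * sin θ * cos θ) ^ 2 := by
  set u := cosSinQuad a b θ with hu
  have hua : u - a = (b - a) * sin θ ^ 2 := by
    rw [hu, cosSinQuad]; linear_combination a * sin_sq_add_cos_sq θ
  have hbu : b - u = (b - a) * cos θ ^ 2 := by
    rw [hu, cosSinQuad]; linear_combination -b * sin_sq_add_cos_sq θ
  calc -u ^ 2 + u - ε ^ 2 = (u - a) * (b - u) := by linear_combination hprod - u * hsum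
    _ = ((b - a) * sin θ * cos θ) ^ 2 := by rw [hua, hbu]; ring

theorem hasDerivAt (θ : ℝ) :
    HasDerivAt (cosSinQuad a b) (2 * (b - a) * sin θ * cos θ) θ := by
  have h := (((hasDerivAt_cos θ).fun_pow 2).const_mul a).fun_add
    (((hasDerivAt_sin θ).fun_pow 2).const_mul b)
  exact h.congr_deriv (by push_cast; ring)

theorem hasDerivAt_arctan_mul_tan (ha : 0 < a) (hb : 0 < b) {θ : ℝ} (hθ : cos θ ≠ 0) :
    HasDerivAt (fun θ ↦ arctan (√b * tan θ / √a) / (√a * √b)) (cosSinQuad a b θ)⁻¹ θ := by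
  have h := ((((hasDerivAt_tan hθ).const_mul √b).div_const √a).arctan).div_const (√a * √b)
  refine h.congr_deriv ?_
  have hQ := (pos ha hb θ).ne'
  have := (sqrt_pos.2 ha).ne'
  have := (sqrt_pos.2 hb).ne'
  rw [cosSinQuad] at hQ ⊢
  rw [tan_eq_sin_div_cos]
  field_simp
  rw [sq_sqrt ha.le, sq_sqrt hb.le]
  ring

theorem integral_inv (ha : 0 < a) (hb : 0 < b) :
    ∫ θ in 0..π / 2, (cosSinQuad a b θ)⁻¹ = π / (2 * √(a * b)) := by
  have hα : 0 < √a := sqrt_pos.2 ha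
  have hβ : 0 < √b := sqrt_pos.2 hb
  have hF0 : Tendsto (fun θ ↦ arctan (√b * tan θ / √a) / (√a * √b)) (𝓝[>] 0) (𝓝 0) := by
    have : ContinuousAt (fun θ ↦ arctan (√b * tan θ / √a) / (√a * √b)) 0 :=
      (hasDerivAt_arctan_mul_tan ha hb (by simp)).continuousAt
    simpa using this.tendsto.mono_left nhdsWithin_le_nhds
  have hFπ : Tendsto (fun θ ↦ arctan (√b * tan θ / √a) / (√a * √b)) (𝓝[<] (π / 2))
      (𝓝 (π / 2 / (√a * √b))) :=
    ((tendsto_arctan_atTop.mono_right nhdsWithin_le_nhds).comp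
      ((tendsto_tan_pi_div_two.const_mul_atTop hβ).atTop_div_const hα)).div_const _
  rw [intervalIntegral.integral_eq_sub_of_hasDerivAt_of_tendsto pi_div_two_pos
    (fun θ hθ ↦ hasDerivAt_arctan_mul_tan ha hb (cos_pos_of_mem_Ioo
      ⟨by linarith [hθ.1, pi_pos], hθ.2⟩).ne')
    ((continuous.inv₀ fun θ ↦ (pos ha hb θ).ne').intervalIntegrable _ _) hF0 hFπ,
    sqrt_mul ha.le]
  ring

end cosSinQuad

theorem integral_eq_integral_comp_cosSinQuad {E : Type*} [NormedAddCommGroup E]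
    [NormedSpace ℝ E] {a b : ℝ} (hab : a ≤ b) (g : ℝ → E) :
    ∫ u in a..b, g u = ∫ θ in 0..π / 2, (2 * (b - a) * sin θ * cos θ) • g (cosSinQuad a b θ) := by
  have hderiv_nonneg : ∀ θ ∈ Ioo 0 (π / 2), 0 ≤ 2 * (b - a) * sin θ * cos θ := fun θ hθ ↦ by
    have := sin_pos_of_pos_of_lt_pi hθ.1 (by linarith [hθ.2, pi_pos])
    have := cos_pos_of_mem_Ioo ⟨by linarith [hθ.1, pi_pos], hθ.2⟩
    have := sub_nonneg.2 hab
    positivity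
  have h := integral_Icc_deriv_smul_of_deriv_nonneg (g := g) cosSinQuad.continuous.continuousOn
    (fun θ _ ↦ cosSinQuad.hasDerivAt θ) hderiv_nonneg pi_div_two_pos.le
  rw [cosSinQuad.apply_zero, cosSinQuad.apply_pi_div_two] at h
  rw [intervalIntegral.integral_of_le hab, intervalIntegral.integral_of_le pi_div_two_pos.le,
    ← integral_Icc_eq_integral_Ioc, ← integral_Icc_eq_integral_Ioc]
  exact h.symm

section SqrtAddSqrt

variable {x y : ℝ}

theorem one_lt_sqrt_add_sqrt (hx : 0 < x) (hy : 0 < y) (h : x + y = 1) : 1 < √x + √y := by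
  have := mul_pos (sqrt_pos.2 hx) (sqrt_pos.2 hy)
  refine (one_lt_sq_iff₀ (by positivity)).1 ?_
  nlinarith [sq_sqrt hx.le, sq_sqrt hy.le]

theorem sq_sqrt_add_sqrt (hx : 0 ≤ x) (hy : 0 ≤ y) (h : x + y = 1) :
    (√x + √y) ^ 2 = 2 - (√x - √y) ^ 2 := by
  linear_combination 2 * sq_sqrt hx + 2 * sq_sqrt hy + 2 * h

theorem sqrt_add_sqrt_le_sqrt_two (hx : 0 ≤ x) (hy : 0 ≤ y) (h : x + y = 1) :
    √x + √y ≤ √2 := by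
  rw [le_sqrt (by positivity) zero_le_two, sq_sqrt_add_sqrt hx hy h]
  nlinarith [sq_nonneg (√x - √y)]

theorem sqrt_add_sqrt_lt_sqrt_two (hx : 0 ≤ x) (hy : 0 ≤ y) (h : x + y = 1) (hxy : x ≠ y) :
    √x + √y < √2 := by
  have : √x - √y ≠ 0 := sub_ne_zero.2 fun e ↦ hxy ((sqrt_inj hx hy).1 e)
  rw [lt_sqrt (by positivity), sq_sqrt_add_sqrt hx hy h]
  nlinarith [pow_pos (abs_pos.2 this) 2, sq_abs (√x - √y)]

theorem div_mul_sqrt_add_div_mul_sqrt (c : ℝ) (hx : 0 < x) (hy : 0 < y) (h : x + y = 1) :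
    c / (x * √y) + c / (y * √x) = (√x + √y) * (c * (x⁻¹ + y⁻¹)) := by
  have := (sqrt_pos.2 hx).ne'
  have := (sqrt_pos.2 hy).ne'
  field_simp
  linear_combination -(c * √x * √y * (√x + √y)) * h - c * √y * sq_sqrt hx.le
    - c * √x * sq_sqrt hy.le

end SqrtAddSqrt

section Period

variable {a b ε : ℝ}

theorem integral_period_eq_integral_cosSinQuad (ha : 0 < a) (hab : a < b) (hsum : a + b = 1)
    (hprod : a * b = ε ^ 2) :
    ∫ u in a..b, ε / (√u * (1 - u) * √(-u ^ 2 + u - ε ^ 2)) =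
      ∫ θ in 0..π / 2, 2 * ε / (cosSinQuad b a θ * √(cosSinQuad a b θ)) := by
  rw [integral_eq_integral_comp_cosSinQuad hab.le, intervalIntegral.integral_of_le
    pi_div_two_pos.le, intervalIntegral.integral_of_le pi_div_two_pos.le,
    integral_Ioc_eq_integral_Ioo, integral_Ioc_eq_integral_Ioo]
  refine setIntegral_congr_fun measurableSet_Ioo fun θ hθ ↦ ?_
  have hs := sin_pos_of_pos_of_lt_pi hθ.1 (by linarith [hθ.2, pi_pos])
  have hc := cos_pos_of_mem_Ioo ⟨by linarith [hθ.1, pi_pos], hθ.2⟩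
  have hba := sub_pos.2 hab
  have hD := (cosSinQuad.pos (ha.trans hab) ha θ).ne'
  have hN := (sqrt_pos.2 (cosSinQuad.pos ha (ha.trans hab) θ)).ne'
  rw [smul_eq_mul, cosSinQuad.neg_sq_add_sub_sq hsum hprod, sqrt_sq (by positivity),
    cosSinQuad.one_sub hsum]
  field_simp

theorem integral_inv_add_inv_cosSinQuad (ha : 0 < a) (hb : 0 < b) (hprod : a * b = ε ^ 2)
    (hε : 0 ≤ ε) :
    ∫ θ in 0..π / 2, 2 * ε * ((cosSinQuad b a θ)⁻¹ + (cosSinQuad a b θ)⁻¹) = 2 * π := by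
  have hε0 : ε ≠ 0 := by rintro rfl; nlinarith [mul_pos ha hb]
  have hint (a b : ℝ) (ha : 0 < a) (hb : 0 < b) :
      IntervalIntegrable (fun θ ↦ (cosSinQuad a b θ)⁻¹) volume 0 (π / 2) :=
    (cosSinQuad.continuous.inv₀ fun θ ↦ (cosSinQuad.pos ha hb θ).ne').intervalIntegrable _ _
  rw [intervalIntegral.integral_const_mul, intervalIntegral.integral_add (hint b a hb ha)
    (hint a b ha hb), cosSinQuad.integral_inv hb ha, cosSinQuad.integral_inv ha hb, mul_comm b a,
    hprod, sqrt_sq hε]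
  field_simp
  ring

theorem two_mul_integral_div_cosSinQuad (ha : 0 < a) (hb : 0 < b) (hsum : a + b = 1) :
    2 * ∫ θ in 0..π / 2, 2 * ε / (cosSinQuad b a θ * √(cosSinQuad a b θ)) =
      ∫ θ in 0..π / 2, (√(cosSinQuad b a θ) + √(cosSinQuad a b θ)) *
        (2 * ε * ((cosSinQuad b a θ)⁻¹ + (cosSinQuad a b θ)⁻¹)) := by
  have hcont (a b : ℝ) (ha : 0 < a) (hb : 0 < b) :
      Continuous fun θ ↦ 2 * ε / (cosSinQuad b a θ * √(cosSinQuad a b θ)) :=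
    continuous_const.div (by fun_prop) fun θ ↦
      (mul_pos (cosSinQuad.pos hb ha θ) (sqrt_pos.2 (cosSinQuad.pos ha hb θ))).ne'
  have hreflect := intervalIntegral.integral_comp_sub_left
    (fun θ ↦ 2 * ε / (cosSinQuad b a θ * √(cosSinQuad a b θ))) (a := 0) (b := π / 2) (π / 2)
  simp only [cosSinQuad.pi_div_two_sub, sub_self, sub_zero] at hreflect
  rw [two_mul]
  nth_rw 2 [← hreflect]
  rw [← intervalIntegral.integral_add ((hcont a b ha hb).intervalIntegrable _ _)
    ((hcont b a hb ha).intervalIntegrable _ _)]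
  refine intervalIntegral.integral_congr fun θ _ ↦ div_mul_sqrt_add_div_mul_sqrt _
    (cosSinQuad.pos hb ha θ) (cosSinQuad.pos ha hb θ) ?_
  rw [cosSinQuad.add_swap, add_comm, hsum]

theorem integral_period_bounds (ha : 0 < a) (hab : a < b) (hsum : a + b = 1)
    (hprod : a * b = ε ^ 2) (hε : 0 < ε) :
    π < ∫ u in a..b, ε / (√u * (1 - u) * √(-u ^ 2 + u - ε ^ 2)) ∧
      ∫ u in a..b, ε / (√u * (1 - u) * √(-u ^ 2 + u - ε ^ 2)) < √2 * π := by
  have hb := ha.trans hab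
  set w := fun θ ↦ 2 * ε * ((cosSinQuad b a θ)⁻¹ + (cosSinQuad a b θ)⁻¹) with hw
  set S := fun θ ↦ √(cosSinQuad b a θ) + √(cosSinQuad a b θ) with hS
  have hw_pos θ : 0 < w θ := by
    have := cosSinQuad.pos ha hb θ
    have := cosSinQuad.pos hb ha θ
    positivity
  have hw_cont : Continuous w := continuous_const.mul <| .add
    (cosSinQuad.continuous.inv₀ fun θ ↦ (cosSinQuad.pos hb ha θ).ne')
    (cosSinQuad.continuous.inv₀ fun θ ↦ (cosSinQuad.pos ha hb θ).ne')
  have hS_cont : Continuous S := by fun_prop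
  have hsum' θ : cosSinQuad b a θ + cosSinQuad a b θ = 1 := by
    rw [cosSinQuad.add_swap, add_comm, hsum]
  have hS_gt θ : 1 < S θ :=
    one_lt_sqrt_add_sqrt (cosSinQuad.pos hb ha θ) (cosSinQuad.pos ha hb θ) (hsum' θ)
  have hS_le θ : S θ ≤ √2 :=
    sqrt_add_sqrt_le_sqrt_two (cosSinQuad.pos hb ha θ).le (cosSinQuad.pos ha hb θ).le (hsum' θ)
  have hS_zero : S 0 < √2 := by
    simpa [hS] using sqrt_add_sqrt_lt_sqrt_two hb.le ha.le (by linarith) hab.ne'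
  have hlower : ∫ θ in 0..π / 2, w θ < ∫ θ in 0..π / 2, S θ * w θ :=
    intervalIntegral.integral_lt_integral_of_continuousOn_of_le_of_exists_lt
      pi_div_two_pos hw_cont.continuousOn (hS_cont.mul hw_cont).continuousOn
      (fun θ _ ↦ (lt_mul_left (hw_pos θ) (hS_gt θ)).le)
      ⟨0, left_mem_Icc.2 pi_div_two_pos.le, lt_mul_left (hw_pos 0) (hS_gt 0)⟩
  have hupper : ∫ θ in 0..π / 2, S θ * w θ < ∫ θ in 0..π / 2, √2 * w θ :=
    intervalIntegral.integral_lt_integral_of_continuousOn_of_le_of_exists_lt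
      pi_div_two_pos (hS_cont.mul hw_cont).continuousOn (continuous_const.mul hw_cont).continuousOn
      (fun θ _ ↦ mul_le_mul_of_nonneg_right (hS_le θ) (hw_pos θ).le)
      ⟨0, left_mem_Icc.2 pi_div_two_pos.le, mul_lt_mul_of_pos_right hS_zero (hw_pos 0)⟩
  rw [intervalIntegral.integral_const_mul] at hupper
  simp only [hS, hw] at hlower hupper
  rw [integral_inv_add_inv_cosSinQuad ha hb hprod hε.le,
    ← two_mul_integral_div_cosSinQuad ha hb hsum] at hlower hupper
  rw [integral_period_eq_integral_cosSinQuad ha hab hsum hprod]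
  constructor <;> linarith

end Period

/-- For all `C > 2`, the minimal-case period
`K(0,C) = ∫_{x₁}^{x₂} C⁻¹/(√u(1-u)√(-u² + u - C⁻²)) du`, with `x₁ < x₂` the roots of
`u² - u + C⁻² = 0`, satisfies `π < K(0,C) < √2 π`; consequently there is no integer
`m ≥ 2` with `K(0,C) = 2π/m`. -/
theorem stmt16 (C : ℝ) (hC : 2 < C) :
    let x₁ : ℝ := (1 - Real.sqrt (1 - 4 / C ^ 2)) / 2
    let x₂ : ℝ := (1 + Real.sqrt (1 - 4 / C ^ 2)) / 2
    let K : ℝ := ∫ u in x₁..x₂,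
      C⁻¹ / (Real.sqrt u * (1 - u) * Real.sqrt (-u ^ 2 + u - C⁻¹ ^ 2))
    (π < K ∧ K < Real.sqrt 2 * π) ∧ ∀ m : ℕ, 2 ≤ m → K ≠ 2 * π / m := by
  intro x₁ x₂ K
  have hC0 : 0 < C := by linarith
  have hdisc : 4 / C ^ 2 < 1 := (div_lt_one (by positivity)).2 (by nlinarith)
  have hdisc_pos : 0 < 4 / C ^ 2 := by positivity
  have hr0 : 0 < √(1 - 4 / C ^ 2) := sqrt_pos.2 (by linarith)
  have hr1 : √(1 - 4 / C ^ 2) < 1 := (sqrt_lt' one_pos).2 (by linarith)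
  have hprod : x₁ * x₂ = C⁻¹ ^ 2 := by
    calc x₁ * x₂ = (1 - √(1 - 4 / C ^ 2) ^ 2) / 4 := by simp only [x₁, x₂]; ring
      _ = C⁻¹ ^ 2 := by rw [sq_sqrt (by linarith)]; field_simp; ring
  have hK : π < K ∧ K < √2 * π := integral_period_bounds (by simp only [x₁]; linarith)
    (by simp only [x₁, x₂]; linarith) (by simp only [x₁, x₂]; ring) hprod (by positivity)
  refine ⟨hK, fun m hm hKm ↦ ?_⟩
  have hm : (2 : ℝ) ≤ m := by exact_mod_cast hm
  have : 2 * π / m ≤ π := (div_le_iff₀ (by positivity)).2 (by nlinarith [pi_pos])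
  linarith [hK.1]
end

section
/- For an integer m ≥ 2, there exists H > 0 with 2·arccot(H) < 2π/m < √2π/((1+H²)^{1/4}(H+√(1+H²))^{1/2}) if and only if cot(π/m) < H < (m²-2)/(2√(m²-1)). -/
/-! With `u = H + √(1 + H²)` one has `2√(1 + H²) u = u² + 1`, so the right-hand bound equals
`2π / √(u² + 1)` and the right inequality reads `u < √(m² - 1)`; solving
`H + √(1 + H²) < r` for `H` gives `H < (r² - 1) / (2r)`. The left inequality is
`arctan (cot (π/m)) = π/2 - π/m < arctan H`. -/

open Real

lemma pi_div_two_sub_arctan_lt_iff {x : ℝ} (hx₀ : 0 < x) (hxπ : x < π) (H : ℝ) :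
    π / 2 - arctan H < x ↔ cot x < H := by
  have harctan_cot : arctan (cot x) = π / 2 - x := by
    rw [cot_eq_cos_div_sin, ← inv_div, ← tan_eq_sin_div_cos, ← tan_pi_div_two_sub,
      arctan_tan (by linarith) (by linarith)]
  rw [← arctan_strictMono.lt_iff_lt (a := cot x), harctan_cot]
  constructor <;> intro h <;> linarith

lemma add_sqrt_one_add_sq_pos (H : ℝ) : 0 < H + √(1 + H ^ 2) := by
  have : |H| < √(1 + H ^ 2) := (lt_sqrt (abs_nonneg H)).2 (by rw [sq_abs]; linarith)
  linarith [neg_abs_le H]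

lemma add_sqrt_one_add_sq_lt_iff {r : ℝ} (hr : 0 < r) (H : ℝ) :
    H + √(1 + H ^ 2) < r ↔ H < (r ^ 2 - 1) / (2 * r) := by
  rw [lt_div_iff₀ (by positivity)]
  constructor
  · intro h
    have hs : √(1 + H ^ 2) < r - H := by linarith
    have := (sqrt_lt' (by linarith [sqrt_nonneg (1 + H ^ 2)])).1 hs
    nlinarith
  · intro h
    have hHr : H < r := by nlinarith
    have hs : √(1 + H ^ 2) < r - H := (sqrt_lt' (by linarith)).2 (by nlinarith)
    linarith

lemma one_add_sq_rpow_mul_add_sqrt_rpow (H : ℝ) :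
    (1 + H ^ 2) ^ ((1 : ℝ) / 4) * (H + √(1 + H ^ 2)) ^ ((1 : ℝ) / 2) =
      √((H + √(1 + H ^ 2)) ^ 2 + 1) / √2 := by
  have hsq : √(1 + H ^ 2) ^ 2 = 1 + H ^ 2 := sq_sqrt (by positivity)
  have hquarter : (1 + H ^ 2) ^ ((1 : ℝ) / 4) = √(√(1 + H ^ 2)) := by
    rw [sqrt_eq_rpow, sqrt_eq_rpow, ← rpow_mul (by positivity)]
    norm_num
  rw [hquarter, ← sqrt_eq_rpow, ← sqrt_mul (sqrt_nonneg _), ← sqrt_div (by positivity)]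
  congr 1
  linarith

theorem stmt18_general (m : ℕ) (hm : 2 ≤ m) (H : ℝ) :
    (2 * (π / 2 - Real.arctan H) < 2 * π / m ∧
      2 * π / m < Real.sqrt 2 * π /
        ((1 + H ^ 2) ^ ((1 : ℝ) / 4) * (H + Real.sqrt (1 + H ^ 2)) ^ ((1 : ℝ) / 2))) ↔
    (Real.cot (π / m) < H ∧ H < ((m : ℝ) ^ 2 - 2) / (2 * Real.sqrt ((m : ℝ) ^ 2 - 1))) := by
  have hm' : (2 : ℝ) ≤ m := by exact_mod_cast hm
  have hr : (m : ℝ) ^ 2 - 2 = √((m : ℝ) ^ 2 - 1) ^ 2 - 1 := by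
    rw [sq_sqrt (by nlinarith)]; ring
  rw [one_add_sq_rpow_mul_add_sqrt_rpow, hr,
    ← add_sqrt_one_add_sq_lt_iff (sqrt_pos.2 (by nlinarith)),
    ← pi_div_two_sub_arctan_lt_iff (by positivity) (div_lt_self pi_pos (by linarith)) H]
  set u := H + √(1 + H ^ 2)
  have hu : 0 < u := add_sqrt_one_add_sq_pos H
  refine and_congr
    (by constructor <;> intro h <;> linarith [mul_div_assoc 2 π (m : ℝ)]) ?_
  calc 2 * π / m < √2 * π / (√(u ^ 2 + 1) / √2)
        ↔ 2 * π / m < 2 * π / √(u ^ 2 + 1) := by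
        rw [div_div_eq_mul_div, mul_right_comm, mul_self_sqrt zero_le_two]
    _ ↔ √(u ^ 2 + 1) < m :=
        div_lt_div_iff_of_pos_left (by positivity) (by positivity) (by positivity)
    _ ↔ u ^ 2 + 1 < m ^ 2 := sqrt_lt' (by positivity)
    _ ↔ u < √((m : ℝ) ^ 2 - 1) := by rw [lt_sqrt hu.le]; constructor <;> intro h <;> linarith

/-- For an integer `m ≥ 2` and `H > 0`, the chain of inequalities
`2 arccot H < 2π/m < √2π/((1+H²)^{1/4}(H+√(1+H²))^{1/2})` holds if and only if
`cot(π/m) < H < (m²-2)/(2√(m²-1))`.  Here `arccot H = π/2 - arctan H ∈ (0, π)`. -/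
theorem stmt18 (m : ℕ) (hm : 2 ≤ m) (H : ℝ) (hH : 0 < H) :
    (2 * (π / 2 - Real.arctan H) < 2 * π / m ∧
      2 * π / m < Real.sqrt 2 * π /
        ((1 + H ^ 2) ^ ((1 : ℝ) / 4) * (H + Real.sqrt (1 + H ^ 2)) ^ ((1 : ℝ) / 2))) ↔
    (Real.cot (π / m) < H ∧ H < ((m : ℝ) ^ 2 - 2) / (2 * Real.sqrt ((m : ℝ) ^ 2 - 1))) :=
  stmt18_general m hm H
end
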